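/- Let A be a real d×d Hurwitz matrix (all eigenvalues of A have strictly negative real part), B a real d×m matrix, R = ∫₀^∞ e^{tA} B Bᵀ e^{tAᵀ} dt, α ∈ ℝᵈ, and ω ≠ 0 a real number. Set a = Aᵀα ∈ ℝᵈ and γ = Bᵀα ∈ ℝᵐ. Then (π/ω²)·(⟨a, Ŝ_A(ω) R a⟩ + ⟨a, Ŝ_A(ω) B γ⟩ + ‖γ‖²/(2π)) = π ⟨α, Ŝ_A(ω) R α⟩. -/

import Mathlib

open MeasureTheory
open scoped Matrix

/-- The controllability Gramian `R = ∫₀^∞ e^{tA} B Bᵀ e^{tAᵀ} dt`, defined entrywise. -/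
noncomputable def gramian {d m : ℕ} (A : Matrix (Fin d) (Fin d) ℝ)
    (B : Matrix (Fin d) (Fin m) ℝ) : Matrix (Fin d) (Fin d) ℝ :=
  Matrix.of fun i j => ∫ t in Set.Ioi (0 : ℝ),
    (NormedSpace.exp (t • A) * B * Bᵀ * NormedSpace.exp (t • Aᵀ)) i j

/-- The matrix-valued cosine transform `Ŝ_A(ω) = (1/π)∫₀^∞ e^{tA} cos ωt dt`,
defined entrywise. -/
noncomputable def cosTransform {d : ℕ} (A : Matrix (Fin d) (Fin d) ℝ) (ω : ℝ) :
    Matrix (Fin d) (Fin d) ℝ :=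
  Matrix.of fun i j => (1 / Real.pi) * ∫ t in Set.Ioi (0 : ℝ),
    Real.cos (ω * t) * (NormedSpace.exp (t • A)) i j

/-!
For a Hurwitz matrix `A`, every eigenvalue of `exp A` is `e^μ` with `Re μ < 0`, so by Gelfand's
formula some power `exp (k A)` is a contraction, and the semigroup property turns this into
exponential decay of `exp (t A)`. All integrals then converge and are evaluated by the fundamental
theorem of calculus: differentiating `e^{tA} B Bᵀ e^{tAᵀ}` gives the Lyapunov equation
`A R + R Aᵀ = -B Bᵀ`, and differentiating `(cos (ωt) A + ω sin (ωt)) e^{tA}` gives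
`π (A² + ω²) Ŝ = -A`, where `Ŝ` commutes with `A`. Hence
`A Ŝ R Aᵀ + A Ŝ B Bᵀ = -A Ŝ A R = ω² Ŝ R + A R / π`, while the Lyapunov equation and the
symmetry of `R` give `2 ⟨α, A R α⟩ = -‖Bᵀ α‖²`; the two `A R` terms cancel.
-/

open NormedSpace Asymptotics Filter Topology Set

theorem norm_mul_pow_le {R : Type*} [SeminormedRing R] (x y : R) (k : ℕ) :
    ‖x * y ^ k‖ ≤ ‖x‖ * ‖y‖ ^ k := by
  rcases k.eq_zero_or_pos with rfl | hk
  · simp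
  · exact (norm_mul_le _ _).trans (mul_le_mul_of_nonneg_left (norm_pow_le' y hk) (norm_nonneg x))

theorem tendsto_exp_neg_mul_atTop {b : ℝ} (hb : 0 < b) :
    Tendsto (fun t => Real.exp (-b * t)) atTop (𝓝 0) :=
  Real.tendsto_exp_atBot.comp (tendsto_id.const_mul_atTop_of_neg (neg_neg_iff_pos.2 hb))

theorem integrableOn_Ioi_of_isBigO_exp_neg {E : Type*} [NormedAddCommGroup E] {f : ℝ → E}
    {a b : ℝ} (hb : 0 < b) (hf : ContinuousOn f (Ici a))
    (ho : f =O[atTop] fun t => Real.exp (-b * t)) : IntegrableOn f (Ioi a) :=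
  (integrable_norm_iff ((hf.mono Ioi_subset_Ici_self).aestronglyMeasurable measurableSet_Ioi)).mp
    (integrable_of_isBigO_exp_neg hb hf.norm ho.norm_left)

theorem isBigO_cos_mul_smul {E : Type*} [NormedAddCommGroup E] [NormedSpace ℝ E] (l : Filter ℝ)
    (ω : ℝ) (f : ℝ → E) : (fun t => Real.cos (ω * t) • f t) =O[l] f :=
  isBigO_of_le' (c := 1) _ fun t => by
    rw [norm_smul, Real.norm_eq_abs]
    exact mul_le_mul_of_nonneg_right (Real.abs_cos_le_one _) (norm_nonneg _)

theorem exists_norm_pow_lt_one_of_spectralRadius_lt_one {A : Type*} [NormedRing A]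
    [NormedAlgebra ℂ A] [CompleteSpace A] {a : A} (h : spectralRadius ℂ a < 1) :
    ∃ k : ℕ, 0 < k ∧ ‖a ^ k‖ < 1 := by
  obtain ⟨k, hk, hk0⟩ :=
    (((spectrum.pow_norm_pow_one_div_tendsto_nhds_spectralRadius a).eventually
      (gt_mem_nhds h)).and (eventually_gt_atTop 0)).exists
  refine ⟨k, hk0, not_le.1 fun h1 => hk.not_ge ?_⟩
  exact ENNReal.one_le_ofReal.2 (Real.one_le_rpow h1 (by positivity))

section NormedAlgebra

variable {𝔸 : Type*} [NormedRing 𝔸] [NormedAlgebra ℝ 𝔸]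

def IsExpStable (a : 𝔸) : Prop :=
  ∃ c > 0, (fun t : ℝ => exp (t • a)) =O[atTop] fun t => Real.exp (-c * t)

theorem Commute.integral_right {X : Type*} [MeasurableSpace X] {μ : Measure X} {a : 𝔸}
    {f : X → 𝔸} (h : ∀ x, Commute a (f x)) : Commute a (∫ x, f x ∂μ) := by
  by_cases hf : Integrable f μ
  · rw [commute_iff_eq, ← integral_const_mul_of_integrable hf,
      ← integral_mul_const_of_integrable hf]
    exact integral_congr_ae (ae_of_all _ fun x => (h x).eq)
  · simp [integral_undef hf]

theorem commute_integral_cos_smul_exp (a : 𝔸) (ω : ℝ) :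
    Commute a (∫ t in Ioi 0, Real.cos (ω * t) • exp (t • a)) :=
  Commute.integral_right fun t => ((Commute.refl a).smul_right t).exp_right.smul_right _

namespace IsExpStable

variable {a b : 𝔸}

theorem tendsto_exp_smul (ha : IsExpStable a) :
    Tendsto (fun t : ℝ => exp (t • a)) atTop (𝓝 0) :=
  let ⟨_, hc, ho⟩ := ha
  ho.trans_tendsto (tendsto_exp_neg_mul_atTop hc)

theorem exists_isBigO_exp_mul_exp (ha : IsExpStable a) (hb : IsExpStable b) (g : 𝔸) :
    ∃ c > 0, (fun t : ℝ => exp (t • a) * g * exp (t • b)) =O[atTop]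
      fun t => Real.exp (-c * t) := by
  obtain ⟨ca, hca, hoa⟩ := ha
  obtain ⟨cb, hcb, hob⟩ := hb
  have hag : (fun t : ℝ => exp (t • a) * g) =O[atTop] fun t => Real.exp (-ca * t) :=
    (isBigO_of_le' (c := ‖g‖) _ fun t => (norm_mul_le _ _).trans_eq (mul_comm _ _)).trans hoa
  exact ⟨ca + cb, by positivity,
    by simpa only [← Real.exp_add, ← add_mul, neg_add] using hag.mul hob⟩

end IsExpStable

variable [CompleteSpace 𝔸]

theorem exp_add_smul (a : 𝔸) (s t : ℝ) :
    exp ((s + t) • a) = exp (s • a) * exp (t • a) := by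
  -- `exp_add_of_commute` asks for a `ℚ`-algebra; `exp` itself does not depend on the scalars
  let := NormedAlgebra.restrictScalars ℚ ℝ 𝔸
  rw [add_smul]
  exact exp_add_of_commute (((Commute.refl a).smul_left s).smul_right t)

theorem exp_add_nat_mul_smul (a : 𝔸) (s T : ℝ) (k : ℕ) :
    exp ((s + k * T) • a) = exp (s • a) * exp (T • a) ^ k := by
  induction k with
  | zero => simp
  | succ k ih =>
    rw [Nat.cast_succ, add_one_mul, ← add_assoc, exp_add_smul, ih, pow_succ, mul_assoc]

theorem isExpStable_of_norm_exp_lt_one {a : 𝔸} {T : ℝ} (hT : 0 < T)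
    (h : ‖exp (T • a)‖ < 1) : IsExpStable a := by
  set r := (1 + ‖exp (T • a)‖) / 2 with hr
  have hr0 : 0 < r := by positivity
  have hr1 : r < 1 := by linarith
  obtain ⟨M, hM⟩ := isCompact_Icc.exists_bound_of_continuousOn
    (differentiable_exp_smul_const ℝ a).continuous.continuousOn (s := Icc 0 T)
  have hM0 : 0 ≤ M := (norm_nonneg _).trans (hM 0 ⟨le_rfl, hT.le⟩)
  set c := -Real.log r / T with hc
  refine ⟨c, div_pos (neg_pos.2 (Real.log_neg hr0 hr1)) hT, IsBigO.of_bound (M / r) ?_⟩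
  filter_upwards [eventually_ge_atTop 0] with t ht
  set k := ⌊t / T⌋₊
  have hkt : k * T ≤ t := (le_div_iff₀ hT).1 (Nat.floor_le (div_nonneg ht hT.le))
  have htk : t < (k + 1) * T := (div_lt_iff₀ hT).1 (Nat.lt_floor_add_one _)
  have hpow : r ^ k ≤ Real.exp (-c * t) / r := by
    have hk : t / T - 1 ≤ k := by rw [div_sub_one hT.ne', div_le_iff₀ hT]; linarith
    calc r ^ k = r ^ (k : ℝ) := (Real.rpow_natCast r k).symm
      _ ≤ r ^ (t / T - 1) := Real.rpow_le_rpow_of_exponent_ge hr0 hr1.le hk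
      _ = Real.exp (-c * t) / r := by
        rw [Real.rpow_sub hr0, Real.rpow_one, Real.rpow_def_of_pos hr0, hc]
        congr 2
        field_simp
  calc ‖exp (t • a)‖ = ‖exp ((t - k * T) • a) * exp (T • a) ^ k‖ := by
        rw [← exp_add_nat_mul_smul, sub_add_cancel]
    _ ≤ M * r ^ k := (norm_mul_pow_le _ _ _).trans <| mul_le_mul
        (hM _ ⟨sub_nonneg.2 hkt, by linarith⟩)
        (pow_le_pow_left₀ (norm_nonneg _) (by linarith) _) (by positivity) hM0
    _ ≤ M * (Real.exp (-c * t) / r) := mul_le_mul_of_nonneg_left hpow hM0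
    _ = M / r * ‖Real.exp (-c * t)‖ := by rw [Real.norm_of_nonneg (Real.exp_pos _).le]; ring

namespace IsExpStable

variable {a b : 𝔸}

theorem integrableOn_cos_smul_exp (ha : IsExpStable a) (ω : ℝ) :
    IntegrableOn (fun t : ℝ => Real.cos (ω * t) • exp (t • a)) (Ioi 0) :=
  let ⟨_, hc, ho⟩ := ha
  integrableOn_Ioi_of_isBigO_exp_neg hc
    ((Real.continuous_cos.comp (continuous_const_mul ω)).smul
      (differentiable_exp_smul_const ℝ a).continuous).continuousOn
    ((isBigO_cos_mul_smul _ ω _).trans ho)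

theorem mul_integral_cos_smul_exp (ha : IsExpStable a) (ω : ℝ) :
    (a * a + ω ^ 2 • 1) * ∫ t in Ioi 0, Real.cos (ω * t) • exp (t • a) = -a := by
  set f : ℝ → 𝔸 := fun t =>
    Real.cos (ω * t) • (a * exp (t • a)) + (ω * Real.sin (ω * t)) • exp (t • a)
  have hderiv : ∀ t ∈ Ici (0 : ℝ),
      HasDerivAt f ((a * a + ω ^ 2 • 1) * (Real.cos (ω * t) • exp (t • a))) t := by
    intro t _
    have hE := hasDerivAt_exp_smul_const' a t
    have hcos : HasDerivAt (fun s => Real.cos (ω * s)) (-Real.sin (ω * t) * ω) t := by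
      simpa using ((hasDerivAt_id t).const_mul ω).cos
    have hsin : HasDerivAt (fun s => ω * Real.sin (ω * s)) (ω * (Real.cos (ω * t) * ω)) t := by
      simpa using (((hasDerivAt_id t).const_mul ω).sin).const_mul ω
    refine ((hcos.smul (hE.const_mul a)).add (hsin.smul hE)).congr_deriv ?_
    simp only [add_mul, smul_mul_assoc, one_mul, mul_smul_comm, mul_assoc]
    module
  have hlim : Tendsto f atTop (𝓝 0) := by
    refine IsBigO.trans_tendsto ?_ ha.tendsto_exp_smul
    refine isBigO_of_le' (c := ‖a‖ + |ω|) _ fun t => (norm_add_le _ _).trans ?_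
    rw [norm_smul, norm_smul, Real.norm_eq_abs, Real.norm_eq_abs, abs_mul, add_mul]
    refine add_le_add ?_ ?_
    · exact (mul_le_of_le_one_left (norm_nonneg _) (Real.abs_cos_le_one _)).trans
        (norm_mul_le _ _)
    · exact mul_le_mul_of_nonneg_right
        (mul_le_of_le_one_right (abs_nonneg _) (Real.abs_sin_le_one _)) (norm_nonneg _)
  have hint := ha.integrableOn_cos_smul_exp ω
  rw [← integral_const_mul_of_integrable hint,
    integral_Ioi_of_hasDerivAt_of_tendsto' hderiv (hint.const_mul _) hlim]
  simp [f]

theorem integrableOn_exp_mul_exp (ha : IsExpStable a) (hb : IsExpStable b) (g : 𝔸) :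
    IntegrableOn (fun t : ℝ => exp (t • a) * g * exp (t • b)) (Ioi 0) :=
  let ⟨_, hc, ho⟩ := exists_isBigO_exp_mul_exp ha hb g
  integrableOn_Ioi_of_isBigO_exp_neg hc
    (((differentiable_exp_smul_const ℝ a).continuous.mul continuous_const).mul
      (differentiable_exp_smul_const ℝ b).continuous).continuousOn ho

theorem mul_integral_add_integral_mul (ha : IsExpStable a) (hb : IsExpStable b) (g : 𝔸) :
    a * (∫ t in Ioi (0 : ℝ), exp (t • a) * g * exp (t • b))
      + (∫ t in Ioi (0 : ℝ), exp (t • a) * g * exp (t • b)) * b = -g := by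
  set F : ℝ → 𝔸 := fun t => exp (t • a) * g * exp (t • b)
  have hderiv : ∀ t ∈ Ici (0 : ℝ), HasDerivAt F (a * F t + F t * b) t := fun t _ =>
    (((hasDerivAt_exp_smul_const' a t).mul_const g).mul
      (hasDerivAt_exp_smul_const b t)).congr_deriv (by simp only [F, mul_assoc])
  obtain ⟨c, hc, hFo⟩ := exists_isBigO_exp_mul_exp ha hb g
  have hFint : IntegrableOn F (Ioi 0) := integrableOn_exp_mul_exp ha hb g
  rw [← integral_const_mul_of_integrable hFint, ← integral_mul_const_of_integrable hFint,
    ← integral_add (hFint.const_mul a) (hFint.mul_const b),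
    integral_Ioi_of_hasDerivAt_of_tendsto' hderiv ((hFint.const_mul a).add (hFint.mul_const b))
      (hFo.trans_tendsto (tendsto_exp_neg_mul_atTop hc))]
  simp [F]

end IsExpStable

end NormedAlgebra

namespace Matrix

variable {n m : Type*} [Fintype n] [Fintype m]

theorem transpose_mulVec_dotProduct {R : Type*} [CommSemiring R] (M : Matrix m n R) (x : m → R)
    (y : n → R) : (Mᵀ *ᵥ x) ⬝ᵥ y = x ⬝ᵥ (M *ᵥ y) := by
  rw [dotProduct_comm, dotProduct_transpose_mulVec]

theorem two_mul_dotProduct_mul_mulVec {A R : Matrix n n ℝ} {B : Matrix n m ℝ} (hR : Rᵀ = R)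
    (hLyap : A * R + R * Aᵀ = -(B * Bᵀ)) (α : n → ℝ) :
    2 * (α ⬝ᵥ ((A * R) *ᵥ α)) = -(α ⬝ᵥ ((B * Bᵀ) *ᵥ α)) := by
  rw [← dotProduct_neg, ← neg_mulVec, ← hLyap, add_mulVec, dotProduct_add, two_mul,
    ← hR, ← transpose_mul, dotProduct_transpose_mulVec, hR]

variable [DecidableEq n]

def IsHurwitz (A : Matrix n n ℝ) : Prop :=
  ∀ μ ∈ spectrum ℂ (A.map Complex.ofReal), μ.re < 0

theorem mul_mul_transpose_add_eq {A S R : Matrix n n ℝ} {B : Matrix n m ℝ} {p ω : ℝ}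
    (hLyap : A * R + R * Aᵀ = -(B * Bᵀ)) (hres : (A * A + ω ^ 2 • 1) * S = -p • A)
    (hcomm : Commute A S) :
    A * S * R * Aᵀ + A * S * B * Bᵀ = ω ^ 2 • (S * R) + p • (A * R) := by
  have hRA : R * Aᵀ + B * Bᵀ = -(A * R) := by
    rw [eq_neg_iff_add_eq_zero, add_comm, ← add_assoc, hLyap, neg_add_cancel]
  have hAAS : A * A * S = -p • A - ω ^ 2 • S := by
    rw [eq_sub_iff_add_eq, ← hres, add_mul, smul_mul_assoc, one_mul]
  calc A * S * R * Aᵀ + A * S * B * Bᵀ = A * S * (R * Aᵀ + B * Bᵀ) := by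
        simp only [Matrix.mul_add, Matrix.mul_assoc]
    _ = -(A * (S * A) * R) := by rw [hRA]; simp only [Matrix.mul_neg, Matrix.mul_assoc]
    _ = ω ^ 2 • (S * R) + p • (A * R) := by
        rw [← hcomm.eq, ← Matrix.mul_assoc, hAAS, Matrix.sub_mul, Matrix.smul_mul,
          Matrix.smul_mul]
        module

end Matrix

theorem gramian_transpose {d m : ℕ} (A : Matrix (Fin d) (Fin d) ℝ)
    (B : Matrix (Fin d) (Fin m) ℝ) : (gramian A B)ᵀ = gramian A B := by
  have h (t : ℝ) :
      (exp (t • A) * B * Bᵀ * exp (t • Aᵀ))ᵀ = exp (t • A) * B * Bᵀ * exp (t • Aᵀ) := by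
    simp [Matrix.transpose_mul, ← Matrix.exp_transpose, Matrix.mul_assoc]
  ext i j
  simp only [Matrix.transpose_apply, gramian, Matrix.of_apply]
  congr 1 with t
  exact congrFun (congrFun (h t) i) j

section LinftyOpNorm

attribute [local instance] Matrix.linftyOpNormedAddCommGroup Matrix.linftyOpNormedSpace
  Matrix.linftyOpNormedRing Matrix.linftyOpNormedAlgebra

namespace Matrix

variable {n m : Type*} [Fintype n] [Fintype m]

theorem norm_map_ofReal (M : Matrix m n ℝ) : ‖M.map Complex.ofReal‖ = ‖M‖ := by
  simp [linfty_opNorm_def]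

variable [DecidableEq n]

theorem exp_mulVec_of_mulVec_eq_smul {𝕂 : Type*} [RCLike 𝕂] {M : Matrix n n 𝕂} {v : n → 𝕂}
    {μ : 𝕂} (h : M *ᵥ v = μ • v) : exp M *ᵥ v = exp μ • v := by
  have hpow (k : ℕ) : M ^ k *ᵥ v = μ ^ k • v := by
    induction k with
    | zero => simp
    | succ k ih => rw [pow_succ', ← mulVec_mulVec, ih, mulVec_smul, h, smul_smul, ← pow_succ]
  have hsum := (exp_series_hasSum_exp' (𝕂 := 𝕂) M).map (mulVec.addMonoidHomLeft v)
    (continuous_id.matrix_mulVec continuous_const)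
  refine hsum.unique ?_
  simp only [Function.comp_def, mulVec.addMonoidHomLeft, AddMonoidHom.coe_mk, ZeroHom.coe_mk,
    smul_mulVec, hpow, smul_smul]
  exact (exp_series_hasSum_exp' (𝕂 := 𝕂) μ).smul_const v

theorem spectrum_exp_subset (M : Matrix n n ℂ) :
    spectrum ℂ (exp M) ⊆ Complex.exp '' spectrum ℂ M := by
  intro z hz
  rw [← spectrum_toLin', ← Module.End.hasEigenvalue_iff_mem_spectrum] at hz
  have hcomm : Commute (toLin' (exp M)) (toLin' M) :=
    ((Commute.refl M).exp_left).map toLinAlgEquiv'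
  have hmaps := Module.End.mapsTo_genEigenspace_of_comm hcomm z 1
  have : Nontrivial (Module.End.genEigenspace (toLin' (exp M)) z 1) :=
    Submodule.nontrivial_iff_ne_bot.2 hz
  obtain ⟨μ, hμ⟩ := Module.End.exists_eigenvalue ((toLin' M).restrict hmaps)
  obtain ⟨w, hw⟩ := hμ.exists_hasEigenvector
  have hMw : M *ᵥ (w : n → ℂ) = μ • (w : n → ℂ) := congrArg Subtype.val hw.apply_eq_smul
  have hw0 : (w : n → ℂ) ≠ 0 := by simpa using hw.2
  have hexpw : exp M *ᵥ (w : n → ℂ) = z • (w : n → ℂ) := by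
    simpa using Module.End.mem_eigenspace_iff.1 w.2
  refine ⟨μ, ?_, ?_⟩
  · rw [← spectrum_toLin', ← Module.End.hasEigenvalue_iff_mem_spectrum]
    exact Module.End.hasEigenvalue_of_hasEigenvector
      ⟨Module.End.mem_eigenspace_iff.2 (by simpa [toLin'_apply] using hMw), hw0⟩
  · rw [Complex.exp_eq_exp_ℂ]
    exact smul_left_injective ℂ hw0 ((exp_mulVec_of_mulVec_eq_smul hMw).symm.trans hexpw)

theorem spectralRadius_exp_lt_one {M : Matrix n n ℂ} (hM : ∀ μ ∈ spectrum ℂ M, μ.re < 0) :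
    spectralRadius ℂ (exp M) < 1 := by
  have hfin := finite_spectrum (exp M)
  have hr : hfin.toFinset.sup (‖·‖₊) < 1 := by
    refine (Finset.sup_lt_iff one_pos).2 fun z hz => ?_
    obtain ⟨μ, hμ, rfl⟩ := spectrum_exp_subset M (hfin.mem_toFinset.1 hz)
    rw [← NNReal.coe_lt_coe, coe_nnnorm, Complex.norm_exp, NNReal.coe_one, Real.exp_lt_one_iff]
    exact hM μ hμ
  refine lt_of_le_of_lt (iSup₂_le fun z hz => ?_) (ENNReal.coe_lt_one_iff.2 hr)
  exact ENNReal.coe_le_coe.2 (Finset.le_sup (f := (‖·‖₊)) (hfin.mem_toFinset.2 hz))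

theorem exp_map_ofReal (M : Matrix n n ℝ) :
    (exp M).map Complex.ofReal = exp (M.map Complex.ofReal) :=
  map_exp (Complex.ofRealHom.mapMatrix) (continuous_id.matrix_map Complex.continuous_ofReal) M

theorem IsHurwitz.isExpStable {A : Matrix n n ℝ} (hA : A.IsHurwitz) : IsExpStable A := by
  have hρ := spectralRadius_exp_lt_one (M := A.map Complex.ofReal) hA
  obtain ⟨k, hk, hlt⟩ := exists_norm_pow_lt_one_of_spectralRadius_lt_one hρ
  refine isExpStable_of_norm_exp_lt_one (T := k) (by positivity) ?_
  have hk : ((k : ℝ) • A).map Complex.ofReal = k • A.map Complex.ofReal := by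
    ext i j
    simp
  have h := exp_map_ofReal ((k : ℝ) • A)
  rw [hk, Matrix.exp_nsmul] at h
  calc ‖exp ((k : ℝ) • A)‖ = ‖(exp ((k : ℝ) • A)).map Complex.ofReal‖ :=
        (norm_map_ofReal _).symm
    _ = ‖exp (A.map Complex.ofReal) ^ k‖ := by rw [h]
    _ < 1 := hlt

end Matrix

theorem IsExpStable.transpose {n : Type*} [Fintype n] [DecidableEq n] {A : Matrix n n ℝ}
    (hA : IsExpStable A) : IsExpStable Aᵀ := by
  obtain ⟨c, hc, ho⟩ := hA
  let L : Matrix n n ℝ →L[ℝ] Matrix n n ℝ :=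
    LinearMap.toContinuousLinearMap (Matrix.transposeLinearEquiv n n ℝ ℝ).toLinearMap
  refine ⟨c, hc, ((L.isBigO_comp _ atTop).trans ho).congr_left fun t => ?_⟩
  show (exp (t • A))ᵀ = exp (t • Aᵀ)
  rw [← Matrix.exp_transpose, Matrix.transpose_smul]

theorem cosTransform_eq_integral {d : ℕ} {A : Matrix (Fin d) (Fin d) ℝ} (hA : IsExpStable A)
    (ω : ℝ) :
    cosTransform A ω = (1 / Real.pi) • ∫ t in Ioi 0, Real.cos (ω * t) • exp (t • A) := by
  -- the `linftyOp` topology is the product topology used in `cosTransform` only up to unfolding,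
  -- so the integrands are matched by `exact` rather than by rewriting
  ext i j
  have h := (LinearMap.toContinuousLinearMap (Matrix.entryLinearMap ℝ ℝ i j)).integral_comp_comm
    (hA.integrableOn_cos_smul_exp ω)
  simp only [cosTransform, Matrix.of_apply, Matrix.smul_apply, smul_eq_mul]
  exact congrArg _ h

theorem gramian_eq_integral {d m : ℕ} {A : Matrix (Fin d) (Fin d) ℝ} (hA : IsExpStable A)
    (B : Matrix (Fin d) (Fin m) ℝ) :
    gramian A B = ∫ t in Ioi (0 : ℝ), exp (t • A) * (B * Bᵀ) * exp (t • Aᵀ) := by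
  ext i j
  have h := (LinearMap.toContinuousLinearMap (Matrix.entryLinearMap ℝ ℝ i j)).integral_comp_comm
    (hA.integrableOn_exp_mul_exp hA.transpose (B * Bᵀ))
  simp only [gramian, Matrix.of_apply, Matrix.mul_assoc] at h ⊢
  exact h

variable {d m : ℕ} {A : Matrix (Fin d) (Fin d) ℝ}

theorem Matrix.IsHurwitz.gramian_lyapunov (hA : A.IsHurwitz) (B : Matrix (Fin d) (Fin m) ℝ) :
    A * gramian A B + gramian A B * Aᵀ = -(B * Bᵀ) := by
  rw [gramian_eq_integral hA.isExpStable]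
  exact hA.isExpStable.mul_integral_add_integral_mul hA.isExpStable.transpose _

theorem Matrix.IsHurwitz.mul_cosTransform (hA : A.IsHurwitz) (ω : ℝ) :
    (A * A + ω ^ 2 • 1) * cosTransform A ω = -(1 / Real.pi) • A := by
  rw [cosTransform_eq_integral hA.isExpStable, Matrix.mul_smul, neg_smul, ← smul_neg]
  exact congrArg _ (hA.isExpStable.mul_integral_cos_smul_exp ω)

theorem Matrix.IsHurwitz.commute_cosTransform (hA : A.IsHurwitz) (ω : ℝ) :
    Commute A (cosTransform A ω) := by
  rw [cosTransform_eq_integral hA.isExpStable]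
  exact (commute_integral_cos_smul_exp A ω).smul_right _

end LinftyOpNorm

/-- With `a = Aᵀα` and `γ = Bᵀα`, the second-order Lyapunov exponent coefficient
`(π/ω²)(⟨a, Ŝ_A(ω)Ra⟩ + ⟨a, Ŝ_A(ω)Bγ⟩ + ‖γ‖²/(2π))` equals `π⟨α, Ŝ_A(ω)Rα⟩`. -/
theorem lambda2_eq_psd {d m : ℕ}
    (A : Matrix (Fin d) (Fin d) ℝ) (B : Matrix (Fin d) (Fin m) ℝ)
    (hA : ∀ μ ∈ spectrum ℂ (A.map Complex.ofReal), μ.re < 0)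
    (α : Fin d → ℝ) (ω : ℝ) (hω : ω ≠ 0) :
    (Real.pi / ω ^ 2) *
        (dotProduct (Aᵀ.mulVec α)
            ((cosTransform A ω).mulVec ((gramian A B).mulVec (Aᵀ.mulVec α)))
          + dotProduct (Aᵀ.mulVec α)
              ((cosTransform A ω).mulVec (B.mulVec (Bᵀ.mulVec α)))
          + (∑ ℓ : Fin m, (Bᵀ.mulVec α) ℓ ^ 2) / (2 * Real.pi))
      = Real.pi *
          dotProduct α ((cosTransform A ω).mulVec ((gramian A B).mulVec α)) := by
  have hH : A.IsHurwitz := hA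
  have hkey := Matrix.mul_mul_transpose_add_eq (hH.gramian_lyapunov B) (hH.mul_cosTransform ω)
    (hH.commute_cosTransform ω)
  have hAR :=
    Matrix.two_mul_dotProduct_mul_mulVec (gramian_transpose A B) (hH.gramian_lyapunov B) α
  have hsq : ∑ ℓ, (Bᵀ *ᵥ α) ℓ ^ 2 = α ⬝ᵥ ((B * Bᵀ) *ᵥ α) := by
    rw [← Matrix.mulVec_mulVec, ← Matrix.transpose_mulVec_dotProduct]
    simp only [dotProduct, sq]
  rw [hsq, neg_eq_iff_eq_neg.mp hAR.symm]
  simp only [Matrix.transpose_mulVec_dotProduct, Matrix.mulVec_mulVec, ← dotProduct_add,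
    ← Matrix.add_mulVec, ← Matrix.mul_assoc, hkey]
  simp only [Matrix.add_mulVec, Matrix.smul_mulVec, dotProduct_add, dotProduct_smul, smul_eq_mul]
  field_simp
  ring
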